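/- arXiv:2505.06309 — 2 statements merged into one kernel-verified Lean document; each statement's English description precedes it below -/
import Mathlib

section
/- The pentagon relation for shear coordinates: define the map g on pairs of positive real numbers by g(x, y) = (y(1+x), 1/x), which describes how the shear coordinates of the two diagonals of a pentagon transform under a single flip. Then the fifth iterate of g is the identity: g(g(g(g(g(x, y))))) = (x, y) for all positive reals x, y. -/
/- Along the orbit of `(x, y)` every coordinate is a ratio of monomials and the polynomials
`1 + x`, `1 + y`, `1 + y + x y`, none of which vanishes for positive `x, y`. After four flips
the state is `(1/y, x y/(1 + y))`, and the fifth flip cancels the factor `1 + y`. -/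

/-- The shear-coordinate pentagon map `g(x, y) = (y(1+x), 1/x)`. -/
noncomputable def shearPentagonMap : ℝ × ℝ → ℝ × ℝ :=
  fun (x, y) => (y * (1 + x), 1 / x)

/-- The pentagon relation for shear coordinates: the fifth iterate of
`g(x, y) = (y(1+x), 1/x)` is the identity on pairs of positive reals. -/
theorem shear_pentagon (x y : ℝ) (hx : 0 < x) (hy : 0 < y) :
    shearPentagonMap (shearPentagonMap (shearPentagonMap (shearPentagonMap
      (shearPentagonMap (x, y))))) = (x, y) := by
  have hxy : 0 < 1 + y + x * y := by positivity
  have flip₁ : shearPentagonMap (x, y) = (y * (1 + x), 1 / x) := rfl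
  have flip₂ : shearPentagonMap (y * (1 + x), 1 / x) =
      ((1 + y + x * y) / x, 1 / (y * (1 + x))) := by
    simp only [shearPentagonMap, Prod.mk.injEq, and_true]
    field_simp
    ring
  have flip₃ : shearPentagonMap ((1 + y + x * y) / x, 1 / (y * (1 + x))) =
      ((1 + y) / (x * y), x / (1 + y + x * y)) := by
    simp only [shearPentagonMap, Prod.mk.injEq]; constructor <;> field_simp; ring
  have flip₄ : shearPentagonMap ((1 + y) / (x * y), x / (1 + y + x * y)) =
      (1 / y, x * y / (1 + y)) := by
    simp only [shearPentagonMap, Prod.mk.injEq]; constructor <;> field_simp; ring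
  have flip₅ : shearPentagonMap (1 / y, x * y / (1 + y)) = (x, y) := by
    simp only [shearPentagonMap, Prod.mk.injEq]; constructor <;> field_simp; ring
  rw [flip₁, flip₂, flip₃, flip₄, flip₅]
end

section
/- The pentagon relation for Ptolemy transformations with boundary labels: let e₁₂, e₂₃, e₃₄, e₄₅, e₅₁ (the labels of the five boundary edges of a pentagon with vertices 1,2,3,4,5) and d₁, d₂ (the labels of the initial diagonals 13 and 14) be positive real numbers. Define successively d₃ = (e₁₂·e₃₄ + e₂₃·d₂)/d₁ (the label of diagonal 24), d₄ = (e₁₂·e₄₅ + e₅₁·d₃)/d₂ (diagonal 25), d₅ = (e₂₃·e₄₅ + e₃₄·d₄)/d₃ (diagonal 35), d₆ = (e₁₂·d₅ + e₂₃·e₅₁)/d₄ (diagonal 13 again), and d₇ = (e₃₄·e₅₁ + e₄₅·d₆)/d₅ (diagonal 14 again). Then d₆ = d₁ and d₇ = d₂; that is, the sequence of five Ptolemy flips carrying the triangulation of the pentagon around a full cycle returns every diagonal label to its original value. -/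
/-!
Cleared of denominators, each flip is a Ptolemy exchange relation `new * old = …` between
the two diagonals of a quadrilateral. The three relations of the first three flips already
force the relations of the last two: after multiplying by `d3`, each of them is a linear
combination of the first three. Positivity only serves to keep every divisor nonzero.
-/

theorem ptolemy_exchange_pentagon {R : Type*} [CommRing R] [IsDomain R]
    {e12 e23 e34 e45 e51 d1 d2 d3 d4 d5 : R} (hd3 : d3 ≠ 0)
    (h13 : d3 * d1 = e12 * e34 + e23 * d2)
    (h24 : d4 * d2 = e12 * e45 + e51 * d3)
    (h35 : d5 * d3 = e23 * e45 + e34 * d4) :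
    e12 * d5 + e23 * e51 = d1 * d4 ∧ e34 * e51 + e45 * d1 = d2 * d5 := by
  constructor <;> apply mul_left_cancel₀ hd3
  · linear_combination e12 * h35 - e23 * h24 - d4 * h13
  · linear_combination e45 * h13 - d2 * h35 - e34 * h24

/-- The pentagon relation for Ptolemy transformations with boundary labels:
five successive Ptolemy flips carry the triangulation of a pentagon around a
full cycle and return both diagonal labels to their original values. -/
theorem ptolemy_pentagon_with_boundary
    (e12 e23 e34 e45 e51 d1 d2 : ℝ)
    (h12 : 0 < e12) (h23 : 0 < e23) (h34 : 0 < e34) (h45 : 0 < e45) (h51 : 0 < e51)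
    (hd1 : 0 < d1) (hd2 : 0 < d2)
    (d3 d4 d5 d6 d7 : ℝ)
    (h3 : d3 = (e12 * e34 + e23 * d2) / d1)
    (h4 : d4 = (e12 * e45 + e51 * d3) / d2)
    (h5 : d5 = (e23 * e45 + e34 * d4) / d3)
    (h6 : d6 = (e12 * d5 + e23 * e51) / d4)
    (h7 : d7 = (e34 * e51 + e45 * d6) / d5) :
    d6 = d1 ∧ d7 = d2 := by
  have hd3 : 0 < d3 := by rw [h3]; positivity
  have hd4 : 0 < d4 := by rw [h4]; positivity
  have hd5 : 0 < d5 := by rw [h5]; positivity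
  obtain ⟨h14, h25⟩ := ptolemy_exchange_pentagon hd3.ne'
    ((eq_div_iff hd1.ne').1 h3) ((eq_div_iff hd2.ne').1 h4) ((eq_div_iff hd3.ne').1 h5)
  have h61 : d6 = d1 := by rw [h6, div_eq_iff hd4.ne', h14]
  refine ⟨h61, ?_⟩
  rw [h7, h61, div_eq_iff hd5.ne', h25, mul_comm]
end
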